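/- arXiv:2308.03719 — 4 statements merged into one kernel-verified Lean document; each statement's English description precedes it below -/
import Mathlib

section
/- Let n ≥ 4 be an even integer. The characteristic polynomial of the distance Laplacian matrix D^L(CP_n) of the cocktail party graph CP_n equals x · (x − (n+2))^{n/2} · (x − n)^{n/2 − 1}; equivalently, its eigenvalue multiset is 0 with multiplicity 1, n+2 with multiplicity n/2, and n with multiplicity n/2 − 1. -/
/-- The cocktail party graph on `Fin n`: distinct vertices `i` and `j` are adjacent
iff `j ≢ i + n/2 (mod n)` (equivalently, iff they are not antipodal). -/
def cocktailParty (n : ℕ) : SimpleGraph (Fin n) where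
  Adj i j := i ≠ j ∧ (j : ℕ) ≠ ((i : ℕ) + n / 2) % n ∧ (i : ℕ) ≠ ((j : ℕ) + n / 2) % n
  symm := ⟨fun _ _ ⟨h1, h2, h3⟩ => ⟨h1.symm, h3, h2⟩⟩
  loopless := ⟨fun _ h => h.1 rfl⟩

/-- The distance Laplacian matrix `D^L(G) = Tr(G) - D(G)` of a graph `G` on a finite
vertex set: the diagonal entry at `u` is the transmission `Tr(u) = ∑ w, d(u, w)` and
the off-diagonal `(u,v)` entry is `-d(u,v)`. -/
noncomputable def distLapMatrix {V : Type*} [Fintype V] [DecidableEq V]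
    (G : SimpleGraph V) : Matrix V V ℝ :=
  Matrix.of fun u v => if u = v then ∑ w, (G.dist u w : ℝ) else -(G.dist u v : ℝ)

/-!
Proof idea: in `CP_{2m}` two distinct vertices are at distance `2` if they are antipodal and at
distance `1` otherwise, so every transmission is `2m` and `D^L = (2m+1) I - P - J`, with `P` the
antipodal permutation matrix. Numbering the vertices by `Fin m ⊕ Fin m` through
`finSumFinEquiv` (so `inl i ↦ i`, `inr i ↦ m + i`), the antipodal map becomes `Sum.swap`
and `D^L` becomes the block matrix `[[A, B], [B, A]]` with `A = (2m+1) I - J`, `B = -I - J`.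
Its characteristic polynomial is `χ(A + B) χ(A - B)`, where `A - B = (2m+2) I` and
`A + B = 2m I - 2J` is a scalar matrix plus a rank-one matrix.
-/

open Matrix Polynomial

namespace Matrix

variable {n R : Type*} [Fintype n] [DecidableEq n] [CommRing R]

theorem charpoly_fromBlocks_self (A B : Matrix n n R) :
    (fromBlocks A B B A).charpoly = (A + B).charpoly * (A - B).charpoly := by
  let P : Matrix (n ⊕ n) (n ⊕ n) R := fromBlocks 1 0 1 1
  let Q : Matrix (n ⊕ n) (n ⊕ n) R := fromBlocks 1 0 (-1) 1
  have hPQ : P * Q = 1 := by simp [P, Q, fromBlocks_multiply, ← fromBlocks_one]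
  calc (fromBlocks A B B A).charpoly = (fromBlocks A B B A * P * Q).charpoly := by
        rw [mul_assoc, hPQ, mul_one]
    _ = (Q * (fromBlocks A B B A * P)).charpoly := charpoly_mul_comm _ _
    _ = (fromBlocks (A + B) B 0 (A - B)).charpoly := by
        congr 1
        simp only [P, Q, fromBlocks_multiply]
        congr 1 <;> noncomm_ring
    _ = _ := charpoly_fromBlocks_zero₂₁ _ _ _

theorem charpoly_scalar (a : R) : (scalar n a).charpoly = (X - C a) ^ Fintype.card n := by
  rw [scalar_apply, charpoly_diagonal, Finset.prod_const, Finset.card_univ]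

theorem charpoly_scalar_add_vecMulVec [Nonempty n] (a : R) (u v : n → R) :
    (scalar n a + vecMulVec u v).charpoly =
      (X - C a) ^ (Fintype.card n - 1) * (X - C (a + u ⬝ᵥ v)) := by
  obtain ⟨k, hk⟩ : ∃ k, Fintype.card n = k + 1 :=
    Nat.exists_eq_succ_of_ne_zero Fintype.card_ne_zero
  rw [add_comm, ← sub_neg_eq_add, ← map_neg, charpoly_sub_scalar, charpoly_vecMulVec, hk,
    Nat.add_sub_cancel]
  simp only [smul_eq_C_mul, sub_comp, mul_comp, pow_comp, X_comp, C_comp, map_neg, C_add]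
  ring

end Matrix

namespace cocktailParty

variable {m : ℕ}

theorem adj_finSumFinEquiv (x y : Fin m ⊕ Fin m) :
    (cocktailParty (m + m)).Adj (finSumFinEquiv x) (finSumFinEquiv y) ↔
      x ≠ y ∧ x ≠ y.swap := by
  have hhalf : (m + m) / 2 = m := by omega
  have hlow (k : Fin m) : ((k : ℕ) + m) % (m + m) = k + m := Nat.mod_eq_of_lt (by omega)
  have hhigh (k : Fin m) : ((k : ℕ) + m + m) % (m + m) = k := by
    rw [add_assoc, Nat.add_mod_right, Nat.mod_eq_of_lt (by omega)]
  rcases x with i | i <;> rcases y with j | j <;>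
    simp [cocktailParty, hhalf, hlow, hhigh, Fin.ext_iff] <;> omega

theorem dist_finSumFinEquiv (hm : 2 ≤ m) (x y : Fin m ⊕ Fin m) :
    (cocktailParty (m + m)).dist (finSumFinEquiv x) (finSumFinEquiv y) =
      if x = y then 0 else if x = y.swap then 2 else 1 := by
  split_ifs with hxy hswap
  · rw [hxy, SimpleGraph.dist_self]
  · subst hswap
    have : Nontrivial (Fin m) := Fin.nontrivial_iff_two_le.mpr hm
    obtain ⟨j, hj⟩ := exists_ne (Sum.elim id id y)
    have hcommon : finSumFinEquiv (.inl j) ∈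
        (cocktailParty (m + m)).commonNeighbors (finSumFinEquiv y.swap) (finSumFinEquiv y) := by
      rw [SimpleGraph.mem_commonNeighbors, adj_finSumFinEquiv, adj_finSumFinEquiv]
      rcases y with i | i <;> simp_all [eq_comm]
    have hedist : (cocktailParty (m + m)).edist (finSumFinEquiv y.swap) (finSumFinEquiv y) = 2 :=
      SimpleGraph.edist_eq_two_iff.mpr
        ⟨by simpa using hxy, by simp [adj_finSumFinEquiv], _, hcommon⟩
    simp [SimpleGraph.dist, hedist]
  · exact SimpleGraph.dist_eq_one_iff_adj.mpr ((adj_finSumFinEquiv x y).mpr ⟨hxy, hswap⟩)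

theorem sum_dist_finSumFinEquiv (hm : 2 ≤ m) (x : Fin m ⊕ Fin m) :
    ∑ v, ((cocktailParty (m + m)).dist (finSumFinEquiv x) v : ℝ) = m + m := by
  have hdist (z : Fin m ⊕ Fin m) :
      ((cocktailParty (m + m)).dist (finSumFinEquiv x) (finSumFinEquiv z) : ℝ) =
        1 - (if z = x then 1 else 0) + (if z = x.swap then 1 else 0) := by
    rw [dist_finSumFinEquiv hm]
    rcases x with i | i <;> rcases z with j | j <;> by_cases hij : i = j <;>
      simp [hij, eq_comm, one_add_one_eq_two]
  rw [← finSumFinEquiv.sum_comp]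
  simp only [hdist, Finset.sum_add_distrib, Finset.sum_sub_distrib, Finset.sum_ite_eq',
    Finset.mem_univ, if_true, Finset.sum_const, Finset.card_univ, Fintype.card_sum,
    Fintype.card_fin]
  ring

theorem reindex_distLapMatrix (hm : 2 ≤ m) :
    reindex finSumFinEquiv.symm finSumFinEquiv.symm (distLapMatrix (cocktailParty (m + m))) =
      fromBlocks
        (of fun i j => if i = j then (m + m : ℝ) else -1) (of fun i j => if i = j then -2 else -1)
        (of fun i j => if i = j then -2 else -1)
        (of fun i j => if i = j then (m + m : ℝ) else -1) := by
  ext x y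
  simp only [Matrix.reindex_apply, Equiv.symm_symm, Matrix.submatrix_apply, distLapMatrix,
    Matrix.of_apply, EmbeddingLike.apply_eq_iff_eq, sum_dist_finSumFinEquiv hm,
    dist_finSumFinEquiv hm]
  rcases x with i | i <;> rcases y with j | j <;> by_cases hij : i = j <;> simp [hij, eq_comm]

theorem charpoly_distLapMatrix (hm : 2 ≤ m) :
    (distLapMatrix (cocktailParty (m + m))).charpoly =
      X * (X - C ((m + m : ℝ) + 2)) ^ m * (X - C (m + m : ℝ)) ^ (m - 1) := by
  have : NeZero m := ⟨by omega⟩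
  have hsum : (of fun i j : Fin m => if i = j then (m + m : ℝ) else -1) +
      (of fun i j => if i = j then -2 else -1) =
        scalar (Fin m) (m + m : ℝ) + vecMulVec (fun _ => -2) (fun _ => 1) := by
    ext i j
    by_cases hij : i = j <;> simp [hij, vecMulVec_apply]
    ring
  have hdiff : (of fun i j : Fin m => if i = j then (m + m : ℝ) else -1) -
      (of fun i j => if i = j then -2 else -1) = scalar (Fin m) (m + m + 2 : ℝ) := by
    ext i j
    by_cases hij : i = j <;> simp [hij]
  have hdot : (fun _ => -2) ⬝ᵥ (fun _ : Fin m => (1 : ℝ)) = -(m + m) := by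
    simp [dotProduct]
    ring
  rw [← charpoly_reindex finSumFinEquiv.symm, reindex_distLapMatrix hm, charpoly_fromBlocks_self,
    hsum, hdiff, charpoly_scalar_add_vecMulVec, charpoly_scalar, hdot, add_neg_cancel, C_0,
    sub_zero, Fintype.card_fin]
  ring

end cocktailParty

open Polynomial in
/-- The characteristic polynomial of the distance Laplacian matrix of the cocktail
party graph `CP_n` is `x (x - (n+2))^{n/2} (x - n)^{n/2 - 1}`; equivalently, its
eigenvalue multiset is `0` with multiplicity `1`, `n + 2` with multiplicity `n/2`,
and `n` with multiplicity `n/2 - 1`. -/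
theorem charpoly_distLapMatrix_cocktailParty (n : ℕ) (hn : 4 ≤ n) (hev : Even n) :
    (distLapMatrix (cocktailParty n)).charpoly =
      X * (X - C ((n : ℝ) + 2)) ^ (n / 2) * (X - C (n : ℝ)) ^ (n / 2 - 1) ∧
    (distLapMatrix (cocktailParty n)).charpoly.roots =
      Multiset.replicate 1 (0 : ℝ) + Multiset.replicate (n / 2) ((n : ℝ) + 2) +
        Multiset.replicate (n / 2 - 1) (n : ℝ) := by
  obtain ⟨m, rfl⟩ := hev
  have hhalf : (m + m) / 2 = m := by omega
  rw [hhalf, Nat.cast_add, cocktailParty.charpoly_distLapMatrix (by omega),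
    ← roots_multiset_prod_X_sub_C (Multiset.replicate 1 (0 : ℝ) + _ + _)]
  simp only [Multiset.map_add, Multiset.prod_add, Multiset.map_replicate,
    Multiset.prod_replicate, pow_one, C_0, sub_zero, and_self]
end

section
/- Let n ≥ 4 be an even integer and let n₁ be an integer with 1 ≤ n₁ ≤ n/2. The characteristic polynomial of the distance Laplacian matrix D^L(Γ_{n,n₁}) equals x · (x − (n+2))^{n/2 − n₁} · (x − n)^{(n/2 + n₁) − 1}; equivalently, its eigenvalue multiset is 0 with multiplicity 1, n+2 with multiplicity n/2 − n₁, and n with multiplicity (n/2 + n₁) − 1. -/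
/-- The graph `Γ_{n,n₁}` on `Fin n`: the complete graph `K_n` with the edges
`{i, i + n/2}` for `n₁ ≤ i < n/2` deleted. For `n₁ = 0` this is the cocktail party
graph `CP_n`, and for `1 ≤ n₁ ≤ n/2` it is obtained from `CP_n` by adding `n₁` of the
`n/2` missing edges. -/
def gammaGraph (n n₁ : ℕ) : SimpleGraph (Fin n) where
  Adj i j := i ≠ j ∧ ¬ ∃ k : ℕ, n₁ ≤ k ∧ k < n / 2 ∧
      (((i : ℕ) = k ∧ (j : ℕ) = k + n / 2) ∨ ((j : ℕ) = k ∧ (i : ℕ) = k + n / 2))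
  symm := ⟨fun _ _ ⟨h1, h2⟩ =>
    ⟨h1.symm, fun ⟨k, hk1, hk2, hor⟩ => h2 ⟨k, hk1, hk2, hor.symm⟩⟩⟩
  loopless := ⟨fun _ h => h.1 rfl⟩

/-!
Deleting a matching `{aᵢ, bᵢ}` from `K_n` (`n ≥ 3`) leaves the matched pairs at distance 2
(through any third vertex) and all other pairs at distance 1, so
`D^L = n I - J + ∑ i, wᵢ wᵢᵀ` with `wᵢ = e_{aᵢ} - e_{bᵢ}`.
The all-ones vector and the `wᵢ` are pairwise orthogonal, of squared norms `n` and `2`. Writing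
`-J + ∑ i, wᵢ wᵢᵀ = Uᵀ S U` with `S = diag(-1, 1, …, 1)`, the identity
`X ^ k χ(A B) = X ^ m χ(B A)` reduces `χ(D^L)` to the characteristic polynomial of the small
diagonal matrix `S U Uᵀ = diag(-n, 2, …, 2)`, shifted by `n`.
-/

open Polynomial Matrix Function

theorem Matrix.charpoly_scalar_add_mul_of_mul_eq_diagonal {R m k : Type*} [CommRing R]
    [Fintype m] [DecidableEq m] [Fintype k] [DecidableEq k]
    (c : R) (A : Matrix m k R) (B : Matrix k m R) (d : k → R) (hBA : B * A = diagonal d)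
    (hk : Fintype.card k ≤ Fintype.card m) :
    (scalar m c + A * B).charpoly =
      (X - C c) ^ (Fintype.card m - Fintype.card k) * ∏ i, (X - C (c + d i)) := by
  rw [add_comm, ← sub_neg_eq_add, ← map_neg, charpoly_sub_scalar,
    charpoly_mul_comm_of_le _ _ hk, hBA, charpoly_diagonal]
  simp only [mul_comp, pow_comp, X_comp, Polynomial.prod_comp, sub_comp, C_comp, map_neg, map_add,
    ← sub_eq_add_neg, sub_sub]

theorem distLapMatrix_eq_of_dist_eq {V : Type*} [Fintype V] [DecidableEq V]
    {G : SimpleGraph V} (P : Matrix V V ℝ) (hP : ∀ u, ∑ v, P u v = 0)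
    (hdist : ∀ u v, u ≠ v → (G.dist u v : ℝ) = 1 - P u v) :
    distLapMatrix G = scalar V (Fintype.card V : ℝ) - of (fun _ _ ↦ 1) + P := by
  ext u v
  by_cases huv : u = v
  · subst huv
    have htr : ∑ w, (G.dist u w : ℝ) = ∑ w, (1 - P u w) - (1 - P u u) := by
      rw [← Finset.add_sum_erase _ _ (Finset.mem_univ u),
        ← Finset.add_sum_erase _ _ (Finset.mem_univ u), SimpleGraph.dist_self,
        Finset.sum_congr rfl fun w hw ↦ hdist u w (Finset.ne_of_mem_erase hw).symm]
      ring
    simp [distLapMatrix, htr, Finset.sum_sub_distrib, hP, Matrix.natCast_apply]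
    ring
  · simp [distLapMatrix, huv, hdist u v huv, Matrix.natCast_apply]
    ring

section PairEdges

variable {V ι : Type*} {a b : ι → V}

variable (a b) in
def pairEdges : Set (Sym2 V) := Set.range fun i ↦ s(a i, b i)

theorem eq_of_mk_mem_pairEdges (h : Injective (Sum.elim a b)) {u v w : V}
    (hv : s(u, v) ∈ pairEdges a b) (hw : s(u, w) ∈ pairEdges a b) : v = w := by
  obtain ⟨ha, hb, hab⟩ := Sum.elim_injective.mp h
  obtain ⟨i, hi⟩ := hv
  obtain ⟨j, hj⟩ := hw
  simp only [Sym2.eq_iff] at hi hj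
  rcases hi with ⟨rfl, rfl⟩ | ⟨rfl, rfl⟩ <;> rcases hj with ⟨hj, rfl⟩ | ⟨rfl, hj⟩
  · rw [ha hj]
  · exact absurd hj.symm (hab _ _)
  · exact absurd hj (hab _ _)
  · rw [hb hj]

theorem ne_of_mk_mem_pairEdges (h : Injective (Sum.elim a b)) {u v : V}
    (huv : s(u, v) ∈ pairEdges a b) : u ≠ v := by
  rintro rfl
  obtain ⟨i, hi⟩ := huv
  simp only [Sym2.eq_iff, or_self] at hi
  exact (Sum.elim_injective.mp h).2.2 i i (hi.1.trans hi.2.symm)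

theorem dist_deleteEdges_pairEdges_of_mem [Fintype V] (hV : 3 ≤ Fintype.card V)
    (h : Injective (Sum.elim a b)) {u v : V} (huv : s(u, v) ∈ pairEdges a b) :
    ((⊤ : SimpleGraph V).deleteEdges (pairEdges a b)).dist u v = 2 := by
  classical
  obtain ⟨w, -, hw⟩ := Finset.exists_mem_notMem_of_card_lt_card (s := {u, v}) (t := .univ)
    (Finset.card_le_two.trans_lt (by rwa [Finset.card_univ]))
  simp only [Finset.mem_insert, Finset.mem_singleton, not_or] at hw
  have hvu : s(v, u) ∈ pairEdges a b := Sym2.eq_swap ▸ huv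
  have hcommon : w ∈ ((⊤ : SimpleGraph V).deleteEdges (pairEdges a b)).commonNeighbors u v := by
    simp only [SimpleGraph.mem_commonNeighbors, SimpleGraph.deleteEdges_adj,
      SimpleGraph.top_adj]
    exact ⟨⟨Ne.symm hw.1, fun huw ↦ hw.2 (eq_of_mk_mem_pairEdges h huv huw).symm⟩,
      ⟨Ne.symm hw.2, fun hvw ↦ hw.1 (eq_of_mk_mem_pairEdges h hvu hvw).symm⟩⟩
  rw [SimpleGraph.dist, SimpleGraph.edist_eq_two_iff.mpr ⟨ne_of_mk_mem_pairEdges h huv,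
    fun hadj ↦ (SimpleGraph.deleteEdges_adj.mp hadj).2 huv, w, hcommon⟩]
  rfl

theorem dist_deleteEdges_pairEdges_of_notMem {u v : V} (huv : u ≠ v)
    (hnot : s(u, v) ∉ pairEdges a b) :
    ((⊤ : SimpleGraph V).deleteEdges (pairEdges a b)).dist u v = 1 :=
  SimpleGraph.dist_eq_one_iff_adj.mpr (SimpleGraph.deleteEdges_adj.mpr ⟨huv, hnot⟩)

variable (a b) in
def pairVec [DecidableEq V] (i : ι) : V → ℝ := Pi.single (a i) 1 - Pi.single (b i) 1

theorem pairVec_apply_left [DecidableEq V] [DecidableEq ι] (h : Injective (Sum.elim a b))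
    (i j : ι) : pairVec a b j (a i) = if i = j then 1 else 0 := by
  obtain ⟨ha, -, hab⟩ := Sum.elim_injective.mp h
  simp [pairVec, Pi.single_apply, ha.eq_iff, hab i j]

theorem pairVec_apply_right [DecidableEq V] [DecidableEq ι] (h : Injective (Sum.elim a b))
    (i j : ι) : pairVec a b j (b i) = -if i = j then 1 else 0 := by
  obtain ⟨-, hb, hab⟩ := Sum.elim_injective.mp h
  simp [pairVec, Pi.single_apply, hb.eq_iff, (hab j i).symm]

theorem pairVec_apply_eq_zero [DecidableEq V] {u : V} {j : ι} (ha : u ≠ a j) (hb : u ≠ b j) :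
    pairVec a b j u = 0 := by
  simp [pairVec, ha, hb]

theorem sum_pairVec [Fintype V] [DecidableEq V] (i : ι) : ∑ v, pairVec a b i v = 0 := by
  simp [pairVec, Finset.sum_sub_distrib]

theorem pairVec_dotProduct_pairVec [Fintype V] [DecidableEq V] [DecidableEq ι]
    (h : Injective (Sum.elim a b)) (i j : ι) :
    pairVec a b i ⬝ᵥ pairVec a b j = if i = j then 2 else 0 := by
  rw [pairVec, sub_dotProduct, single_dotProduct, single_dotProduct,
    pairVec_apply_left h, pairVec_apply_right h]
  split_ifs <;> norm_num

theorem sum_pairVec_mul_pairVec_of_mem [DecidableEq V] [Fintype ι] (h : Injective (Sum.elim a b))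
    {u v : V} (huv : s(u, v) ∈ pairEdges a b) :
    ∑ j, pairVec a b j u * pairVec a b j v = -1 := by
  classical
  obtain ⟨i, hi⟩ := huv
  rcases Sym2.eq_iff.mp hi with ⟨rfl, rfl⟩ | ⟨rfl, rfl⟩ <;>
    simp [pairVec_apply_left h, pairVec_apply_right h]

theorem sum_pairVec_mul_pairVec_of_notMem [DecidableEq V] [Fintype ι] {u v : V} (huv : u ≠ v)
    (hnot : s(u, v) ∉ pairEdges a b) :
    ∑ j, pairVec a b j u * pairVec a b j v = 0 := by
  refine Finset.sum_eq_zero fun j _ ↦ ?_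
  by_cases hua : u = a j
  · subst hua
    rw [pairVec_apply_eq_zero (Ne.symm huv) fun hvb ↦ hnot ⟨j, by rw [hvb]⟩, mul_zero]
  by_cases hub : u = b j
  · subst hub
    rw [pairVec_apply_eq_zero (fun hva ↦ hnot ⟨j, by rw [hva, Sym2.eq_swap]⟩) (Ne.symm huv),
      mul_zero]
  rw [pairVec_apply_eq_zero hua hub, zero_mul]

variable (a b) in
noncomputable def pairRows [DecidableEq V] : Matrix (Unit ⊕ ι) V ℝ :=
  of (Sum.elim (fun _ ↦ 1) (pairVec a b))

theorem pairRows_mul_transpose [Fintype V] [DecidableEq V] [DecidableEq ι]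
    (h : Injective (Sum.elim a b)) :
    pairRows a b * (pairRows a b)ᵀ =
      diagonal (Sum.elim (fun _ ↦ (Fintype.card V : ℝ)) fun _ ↦ 2) := by
  ext (_ | i) (_ | j) <;>
    simp [pairRows, mul_apply, sum_pairVec, ← dotProduct.eq_def, pairVec_dotProduct_pairVec h,
      diagonal_apply, eq_comm]

theorem distLapMatrix_deleteEdges_pairEdges [Fintype V] [DecidableEq V] [Fintype ι]
    [DecidableEq ι] (hV : 3 ≤ Fintype.card V) (h : Injective (Sum.elim a b)) :
    distLapMatrix ((⊤ : SimpleGraph V).deleteEdges (pairEdges a b)) =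
      scalar V (Fintype.card V : ℝ) + (pairRows a b)ᵀ *
        (diagonal (Sum.elim (fun _ : Unit ↦ (-1 : ℝ)) fun _ : ι ↦ 1) * pairRows a b) := by
  rw [distLapMatrix_eq_of_dist_eq (of fun u v ↦ ∑ j, pairVec a b j u * pairVec a b j v)]
  · ext u v
    simp [pairRows, mul_apply, Fintype.sum_sum_type, diagonal_apply]
    ring
  · intro u
    simp [← Finset.mul_sum, Finset.sum_comm (γ := V), sum_pairVec]
  · intro u v huv
    by_cases hmem : s(u, v) ∈ pairEdges a b
    · rw [dist_deleteEdges_pairEdges_of_mem hV h hmem, of_apply,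
        sum_pairVec_mul_pairVec_of_mem h hmem]
      norm_num
    · rw [dist_deleteEdges_pairEdges_of_notMem huv hmem, of_apply,
        sum_pairVec_mul_pairVec_of_notMem huv hmem]
      norm_num

theorem charpoly_distLapMatrix_deleteEdges_pairEdges [Fintype V] [DecidableEq V] [Fintype ι]
    [DecidableEq ι] (hV : 3 ≤ Fintype.card V) (h : Injective (Sum.elim a b)) :
    (distLapMatrix ((⊤ : SimpleGraph V).deleteEdges (pairEdges a b))).charpoly =
      X * (X - C ((Fintype.card V : ℝ) + 2)) ^ Fintype.card ι *
        (X - C (Fintype.card V : ℝ)) ^ (Fintype.card V - Fintype.card ι - 1) := by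
  have hcard := Fintype.card_le_of_injective _ h
  rw [Fintype.card_sum] at hcard
  rw [distLapMatrix_deleteEdges_pairEdges hV h, charpoly_scalar_add_mul_of_mul_eq_diagonal _ _ _
    (Sum.elim (fun _ ↦ -(Fintype.card V : ℝ)) fun _ ↦ 2)]
  · simp [Fintype.prod_sum_type, Fintype.card_sum, Nat.sub_add_eq, Nat.sub_right_comm]
    ring
  · rw [Matrix.mul_assoc, pairRows_mul_transpose h, diagonal_mul_diagonal]
    congr
    ext (_ | _) <;> simp
  · simp only [Fintype.card_sum, Fintype.card_unit]
    omega

end PairEdges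

def gammaPairFst (n n₁ : ℕ) (i : Fin (n / 2 - n₁)) : Fin n := ⟨n₁ + i, by omega⟩

def gammaPairSnd (n n₁ : ℕ) (i : Fin (n / 2 - n₁)) : Fin n := ⟨n₁ + i + n / 2, by omega⟩

theorem injective_sumElim_gammaPair (n n₁ : ℕ) :
    Injective (Sum.elim (gammaPairFst n n₁) (gammaPairSnd n n₁)) :=
  Sum.elim_injective.mpr ⟨fun i j h ↦ by simpa [gammaPairFst, Fin.ext_iff] using h,
    fun i j h ↦ by simpa [gammaPairSnd, Fin.ext_iff] using h,
    fun i j h ↦ by simp [gammaPairFst, gammaPairSnd, Fin.ext_iff] at h; omega⟩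

theorem gammaGraph_eq_deleteEdges_pairEdges (n n₁ : ℕ) :
    gammaGraph n n₁ = (⊤ : SimpleGraph (Fin n)).deleteEdges
      (pairEdges (gammaPairFst n n₁) (gammaPairSnd n n₁)) := by
  ext u v
  simp only [gammaGraph, SimpleGraph.deleteEdges_adj, SimpleGraph.top_adj, pairEdges,
    Set.mem_range, Sym2.eq_iff, gammaPairFst, gammaPairSnd, Fin.ext_iff]
  refine and_congr_right fun _ ↦ not_congr ⟨?_, ?_⟩
  · rintro ⟨k, hk₁, hk, h⟩
    exact ⟨⟨k - n₁, by omega⟩, by dsimp only; omega⟩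
  · rintro ⟨i, h⟩
    exact ⟨n₁ + i, by omega, by omega, by omega⟩

open Polynomial in
theorem charpoly_distLapMatrix_gammaGraph_general (n n₁ : ℕ) (hn : 4 ≤ n) (hev : Even n)
    (h2 : n₁ ≤ n / 2) :
    (distLapMatrix (gammaGraph n n₁)).charpoly =
      X * (X - C ((n : ℝ) + 2)) ^ (n / 2 - n₁) * (X - C (n : ℝ)) ^ (n / 2 + n₁ - 1) ∧
    (distLapMatrix (gammaGraph n n₁)).charpoly.roots =
      Multiset.replicate 1 (0 : ℝ) + Multiset.replicate (n / 2 - n₁) ((n : ℝ) + 2) +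
        Multiset.replicate (n / 2 + n₁ - 1) (n : ℝ) := by
  have hcp : (distLapMatrix (gammaGraph n n₁)).charpoly =
      X * (X - C ((n : ℝ) + 2)) ^ (n / 2 - n₁) * (X - C (n : ℝ)) ^ (n / 2 + n₁ - 1) := by
    rw [gammaGraph_eq_deleteEdges_pairEdges, charpoly_distLapMatrix_deleteEdges_pairEdges
      (by simp only [Fintype.card_fin]; omega) (injective_sumElim_gammaPair n n₁)]
    have := Nat.even_iff.mp hev
    simp only [Fintype.card_fin]
    rw [show n - (n / 2 - n₁) - 1 = n / 2 + n₁ - 1 by omega]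
  refine ⟨hcp, ?_⟩
  rw [hcp, ← roots_multiset_prod_X_sub_C (_ + _ + _)]
  simp [Multiset.prod_replicate, mul_assoc]

open Polynomial in
/-- The characteristic polynomial of the distance Laplacian matrix of `Γ_{n,n₁}` is
`x (x - (n+2))^{n/2 - n₁} (x - n)^{(n/2 + n₁) - 1}`; equivalently, its eigenvalue
multiset is `0` with multiplicity `1`, `n + 2` with multiplicity `n/2 - n₁`, and `n`
with multiplicity `(n/2 + n₁) - 1`. -/
theorem charpoly_distLapMatrix_gammaGraph (n n₁ : ℕ) (hn : 4 ≤ n) (hev : Even n)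
    (h1 : 1 ≤ n₁) (h2 : n₁ ≤ n / 2) :
    (distLapMatrix (gammaGraph n n₁)).charpoly =
      X * (X - C ((n : ℝ) + 2)) ^ (n / 2 - n₁) * (X - C (n : ℝ)) ^ (n / 2 + n₁ - 1) ∧
    (distLapMatrix (gammaGraph n n₁)).charpoly.roots =
      Multiset.replicate 1 (0 : ℝ) + Multiset.replicate (n / 2 - n₁) ((n : ℝ) + 2) +
        Multiset.replicate (n / 2 + n₁ - 1) (n : ℝ) :=
  charpoly_distLapMatrix_gammaGraph_general n n₁ hn hev h2
end

section
/- Let n ≥ 3 and n₁ be integers with 1 ≤ n₁ ≤ n − (n₁ + 1), and let Θ_{n,n₁} be the graph consisting of two cliques, one on n₁ + 1 vertices and one on n − n₁ vertices, sharing exactly one common (cut) vertex v. Then the characteristic polynomial of the Laplacian matrix L(Θ_{n,n₁}) equals x · (x − 1) · (x − n) · (x − (n₁ + 1))^{n₁ − 1} · (x − (n − n₁))^{n − (n₁ + 2)}. -/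
/-- The graph `Θ_{n,n₁}` on `Fin n`: two cliques, one on the vertices `{0, …, n₁}` and
one on the vertices `{n₁, …, n-1}`, overlapping exactly in the cut vertex `n₁`. -/
def thetaGraph (n n₁ : ℕ) : SimpleGraph (Fin n) where
  Adj i j := i ≠ j ∧ (((i : ℕ) ≤ n₁ ∧ (j : ℕ) ≤ n₁) ∨ (n₁ ≤ (i : ℕ) ∧ n₁ ≤ (j : ℕ)))
  symm := ⟨fun _ _ ⟨h1, h2⟩ => ⟨h1.symm, h2.imp And.symm And.symm⟩⟩
  loopless := ⟨fun _ h => h.1 rfl⟩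

noncomputable instance (n n₁ : ℕ) : DecidableRel (thetaGraph n n₁).Adj :=
  fun _ _ => Classical.dec _

/-!
The Laplacian of `Θ_{n,n₁}` has an orthogonal eigenbasis. Write `v` for the cut vertex. The
vertices of `{0, …, n₁ - 1}` are pairwise adjacent and have the same neighbours outside this set,
so every vector supported there with zero sum is an eigenvector with eigenvalue
`degree + 1 = n₁ + 1`; the Helmert contrasts `𝟙_{[0,m)} - m·e_m` form an orthogonal basis of
these. The same holds on `{n₁ + 1, …, n - 1}` with eigenvalue `n - n₁`. Since `v` is adjacent to
every other vertex, the remaining eigenvectors are `𝟙` (eigenvalue `0`), `𝟙 - n·e_v`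
(eigenvalue `n`) and the zero-sum vector that is constant on each side of `v` and vanishes at
`v` (eigenvalue `1`). Apart from `𝟙`, each of these is a contrast `#t·𝟙_s - #s·𝟙_t`, and of any
two of them one is a contrast on whose `s ∪ t` the other is constant. So the family is
orthogonal, hence a basis, and the characteristic polynomial is the product of the `X - λ`.
-/

open Finset Polynomial Matrix

theorem Matrix.charpoly_eq_prod_of_linearIndependent {K ι κ : Type*} [Field K]
    [Fintype ι] [DecidableEq ι] [Fintype κ] [DecidableEq κ] (A : Matrix κ κ K)
    {v : ι → κ → K} (hv : LinearIndependent K v) (hcard : Fintype.card ι = Fintype.card κ)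
    {μ : ι → K} (hμ : ∀ i, A *ᵥ v i = μ i • v i) :
    A.charpoly = ∏ i, (X - C (μ i)) := by
  let b := basisOfLinearIndependentOfCardEqFinrank' v hv
    (hcard.trans (Module.finrank_fintype_fun_eq_card K).symm)
  have hb : ∀ i, b i = v i := fun i => by simp [b]
  have hdiag : LinearMap.toMatrix b b A.toLin' = diagonal μ := by
    ext i j
    rw [LinearMap.toMatrix_apply, toLin'_apply, hb, hμ, ← hb, map_smul, b.repr_self]
    rcases eq_or_ne i j with rfl | hij
    · simp
    · simp [hij]
  rw [← charpoly_toLin', ← LinearMap.charpoly_toMatrix _ b, hdiag, charpoly_diagonal]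

theorem linearIndependent_of_pairwise_dotProduct_eq_zero {K ι κ : Type*} [Field K]
    [LinearOrder K] [IsStrictOrderedRing K] [Fintype ι] [Fintype κ] {v : ι → κ → K}
    (hv : ∀ i, v i ≠ 0) (horth : Pairwise fun i j => v i ⬝ᵥ v j = 0) :
    LinearIndependent K v := by
  rw [Fintype.linearIndependent_iff]
  intro g hg i
  have := congrArg (v i ⬝ᵥ ·) hg
  simp only [dotProduct_sum, dotProduct_smul, dotProduct_zero, smul_eq_mul] at this
  rw [Finset.sum_eq_single i (fun j _ hji => by rw [horth hji.symm, mul_zero]) (by simp)] at this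
  exact (mul_eq_zero.1 this).resolve_right (mt dotProduct_self_eq_zero.1 (hv i))

section Contrast

variable {V : Type*} [DecidableEq V] (R : Type*) [CommRing R]

def contrastVec (s t : Finset V) : V → R :=
  fun i => (if i ∈ s then (#t : R) else 0) - (if i ∈ t then (#s : R) else 0)

variable {R}

theorem contrastVec_dotProduct_eq_zero [Fintype V] {s t : Finset V} {y : V → R} {c : R}
    (hy : ∀ i ∈ s ∪ t, y i = c) : contrastVec R s t ⬝ᵥ y = 0 := by
  have hconst : ∀ u : Finset V, u ⊆ s ∪ t → ∑ i ∈ u, y i = #u * c := fun u hu => by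
    rw [sum_congr rfl fun i hi => hy i (hu hi), sum_const, nsmul_eq_mul]
  simp only [dotProduct, contrastVec, sub_mul, ite_mul, zero_mul, sum_sub_distrib,
    ← sum_filter, filter_mem_eq_inter, univ_inter, ← mul_sum]
  rw [hconst s subset_union_left, hconst t subset_union_right]
  ring

theorem sum_contrastVec [Fintype V] (s t : Finset V) : ∑ i, contrastVec R s t i = 0 := by
  rw [← dotProduct_one]
  exact contrastVec_dotProduct_eq_zero fun _ _ => rfl

theorem contrastVec_apply_of_notMem {s t : Finset V} {i : V} (hs : i ∉ s) (ht : i ∉ t) :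
    contrastVec R s t i = 0 := by
  simp [contrastVec, hs, ht]

theorem contrastVec_ne_zero [CharZero R] {s t : Finset V} (hst : Disjoint s t)
    (hs : s.Nonempty) (ht : t.Nonempty) : contrastVec R s t ≠ 0 := by
  obtain ⟨i, hi⟩ := hs
  refine fun h => ht.card_pos.ne' ((Nat.cast_eq_zero (R := R)).1 ?_)
  simpa [contrastVec, hi, disjoint_left.1 hst hi] using congrFun h i

end Contrast

namespace SimpleGraph

variable {V R : Type*} [Fintype V] [DecidableEq V] [CommRing R] (G : SimpleGraph V)
  [DecidableRel G.Adj]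

theorem lapMatrix_mulVec_apply_eq_sum_sub (i : V) (x : V → R) :
    (G.lapMatrix R *ᵥ x) i = ∑ u ∈ G.neighborFinset i, (x i - x u) := by
  rw [lapMatrix_mulVec_apply, sum_sub_distrib, sum_const, card_neighborFinset_eq_degree,
    nsmul_eq_mul]

theorem lapMatrix_mulVec_eq_smul_of_isClique {C : Finset V} (hC : G.IsClique (C : Set V))
    (hext : ∀ u ∉ C, ∀ i ∈ C, ∀ j ∈ C, G.Adj u i → G.Adj u j) {d : ℕ}
    (hdeg : ∀ i ∈ C, G.degree i = d) {x : V → R} (hx : ∀ u ∉ C, x u = 0)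
    (hsum : ∑ u, x u = 0) :
    G.lapMatrix R *ᵥ x = ((d : R) + 1) • x := by
  ext i
  rw [lapMatrix_mulVec_apply, Pi.smul_apply, smul_eq_mul]
  by_cases hi : i ∈ C
  · have hnbr : ∑ u ∈ G.neighborFinset i, x u = ∑ u ∈ univ.erase i, x u := by
      refine sum_subset (fun u hu => ?_) fun u hu hnu => ?_
      · exact mem_erase.2 ⟨(G.ne_of_adj ((G.mem_neighborFinset i u).1 hu)).symm, mem_univ u⟩
      · refine hx u fun huC => hnu ((G.mem_neighborFinset i u).2 ?_)
        exact hC hi huC (ne_of_mem_erase hu).symm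
    rw [hnbr, sum_erase_eq_sub (mem_univ i), hsum, hdeg i hi]
    ring
  · rw [hx i hi, mul_zero, mul_zero, sub_eq_zero]
    by_cases hadj : ∃ j ∈ C, G.Adj i j
    · obtain ⟨j, hj, hij⟩ := hadj
      rw [← hsum]
      symm
      refine sum_subset (subset_univ _) fun u _ hu => hx u fun huC => hu ?_
      exact (G.mem_neighborFinset i u).2 (hext i hi j hj u huC hij)
    · push Not at hadj
      refine (sum_eq_zero fun u hu => hx u fun huC => hadj u huC ?_).symm
      exact (G.mem_neighborFinset i u).1 hu

variable {G} {v : V}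

theorem neighborFinset_eq_erase_of_forall_adj (hv : ∀ u ≠ v, G.Adj v u) :
    G.neighborFinset v = univ.erase v := by
  ext u
  simpa [mem_neighborFinset] using ⟨fun h => (G.ne_of_adj h).symm, fun h => hv u h⟩

theorem lapMatrix_mulVec_apply_of_forall_adj (hv : ∀ u ≠ v, G.Adj v u) (x : V → R) :
    (G.lapMatrix R *ᵥ x) v = Fintype.card V * x v - ∑ u, x u := by
  rw [lapMatrix_mulVec_apply_eq_sum_sub, neighborFinset_eq_erase_of_forall_adj hv,
    sum_sub_distrib, sum_const, card_erase_of_mem (mem_univ v), sum_erase_eq_sub (mem_univ v),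
    card_univ, nsmul_eq_mul, Nat.cast_pred (Fintype.card_pos_iff.2 ⟨v⟩)]
  ring

theorem lapMatrix_mulVec_apply_of_forall_adj_of_ne (hv : ∀ u ≠ v, G.Adj v u) {x : V → R}
    (hx : ∀ i j, i ≠ v → j ≠ v → G.Adj i j → x i = x j) {i : V} (hi : i ≠ v) :
    (G.lapMatrix R *ᵥ x) i = x i - x v := by
  rw [lapMatrix_mulVec_apply_eq_sum_sub]
  have hvi : v ∈ G.neighborFinset i := (G.mem_neighborFinset i v).2 (hv i hi).symm
  rw [← sum_erase_add _ _ hvi, sum_eq_zero, zero_add]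
  intro u hu
  obtain ⟨huv, hu⟩ := mem_erase.1 hu
  rw [hx i u hi huv ((G.mem_neighborFinset i u).1 hu), sub_self]

theorem lapMatrix_mulVec_contrastVec_erase_of_forall_adj (hv : ∀ u ≠ v, G.Adj v u) :
    G.lapMatrix R *ᵥ contrastVec R (univ.erase v) {v} =
      (Fintype.card V : R) • contrastVec R (univ.erase v) {v} := by
  have hx : ∀ i j, i ≠ v → j ≠ v → G.Adj i j →
      contrastVec R (univ.erase v) {v} i = contrastVec R (univ.erase v) {v} j := by
    intro i j hi hj _
    simp [contrastVec, hi, hj]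
  ext i
  rcases eq_or_ne i v with rfl | hi
  · rw [lapMatrix_mulVec_apply_of_forall_adj hv, sum_contrastVec, sub_zero, Pi.smul_apply,
      smul_eq_mul]
  · rw [lapMatrix_mulVec_apply_of_forall_adj_of_ne hv hx hi]
    simp [contrastVec, hi, card_erase_of_mem, Nat.cast_sub (Fintype.card_pos_iff.2 ⟨v⟩)]

end SimpleGraph

section Theta

variable {n : ℕ} {v : Fin n}

theorem thetaGraph_adj {i j : Fin n} :
    (thetaGraph n v).Adj i j ↔ i ≠ j ∧ (i ≤ v ∧ j ≤ v ∨ v ≤ i ∧ v ≤ j) := Iff.rfl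

theorem thetaGraph_adj_cut {u : Fin n} (hu : u ≠ v) : (thetaGraph n v).Adj v u :=
  ⟨hu.symm, by rcases le_total u v with h | h <;> simp [h]⟩

theorem thetaGraph_isClique_Iio : (thetaGraph n v).IsClique (Iio v : Set (Fin n)) :=
  fun _ hi _ hj hij => ⟨hij, Or.inl ⟨(mem_Iio.1 hi).le, (mem_Iio.1 hj).le⟩⟩

theorem thetaGraph_isClique_Ioi : (thetaGraph n v).IsClique (Ioi v : Set (Fin n)) :=
  fun _ hi _ hj hij => ⟨hij, Or.inr ⟨(mem_Ioi.1 hi).le, (mem_Ioi.1 hj).le⟩⟩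

theorem thetaGraph_degree_of_lt {i : Fin n} (hi : i < v) : (thetaGraph n v).degree i = v := by
  have : (thetaGraph n v).neighborFinset i = (Iic v).erase i := by
    ext u
    simp only [SimpleGraph.mem_neighborFinset, thetaGraph_adj, mem_erase, mem_Iic]
    omega
  rw [← SimpleGraph.card_neighborFinset_eq_degree, this, card_erase_of_mem (mem_Iic.2 hi.le),
    Fin.card_Iic, Nat.add_sub_cancel]

theorem thetaGraph_degree_of_gt {i : Fin n} (hi : v < i) :
    (thetaGraph n v).degree i = n - v - 1 := by
  have : (thetaGraph n v).neighborFinset i = (Ici v).erase i := by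
    ext u
    simp only [SimpleGraph.mem_neighborFinset, thetaGraph_adj, mem_erase, mem_Ici]
    omega
  rw [← SimpleGraph.card_neighborFinset_eq_degree, this, card_erase_of_mem (mem_Ici.2 hi.le),
    Fin.card_Ici]

theorem thetaGraph_adj_of_notMem_Iio : ∀ u ∉ Iio v, ∀ i ∈ Iio v, ∀ j ∈ Iio v,
    (thetaGraph n v).Adj u i → (thetaGraph n v).Adj u j := by
  simp only [thetaGraph_adj, mem_Iio]
  omega

theorem thetaGraph_adj_of_notMem_Ioi : ∀ u ∉ Ioi v, ∀ i ∈ Ioi v, ∀ j ∈ Ioi v,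
    (thetaGraph n v).Adj u i → (thetaGraph n v).Adj u j := by
  simp only [thetaGraph_adj, mem_Ioi]
  omega

theorem lapMatrix_mulVec_thetaGraph_contrastVec_Iio_Ioi :
    (thetaGraph n v).lapMatrix ℝ *ᵥ contrastVec ℝ (Iio v) (Ioi v) =
      contrastVec ℝ (Iio v) (Ioi v) := by
  set x := contrastVec ℝ (Iio v) (Ioi v)
  have hxv : x v = 0 := contrastVec_apply_of_notMem (by simp) (by simp)
  have hx : ∀ i j, i ≠ v → j ≠ v → (thetaGraph n v).Adj i j → x i = x j := by
    intro i j hi hj hij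
    rcases (thetaGraph_adj.1 hij).2 with ⟨hi', hj'⟩ | ⟨hi', hj'⟩
    · simp [x, contrastVec, lt_of_le_of_ne hi' hi, lt_of_le_of_ne hj' hj, not_lt.2 hi',
        not_lt.2 hj']
    · simp [x, contrastVec, lt_of_le_of_ne hi' hi.symm, lt_of_le_of_ne hj' hj.symm,
        not_lt.2 hi', not_lt.2 hj']
  ext i
  rcases eq_or_ne i v with rfl | hi
  · rw [SimpleGraph.lapMatrix_mulVec_apply_of_forall_adj (fun _ => thetaGraph_adj_cut), hxv,
      sum_contrastVec, mul_zero, sub_zero]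
  · rw [SimpleGraph.lapMatrix_mulVec_apply_of_forall_adj_of_ne (fun _ => thetaGraph_adj_cut) hx hi,
      hxv, sub_zero]

variable (v) in
noncomputable def thetaEigenvector : Fin (v - 1) ⊕ Fin (n - v - 2) ⊕ Fin 3 → Fin n → ℝ
  | .inl k =>
    let m : Fin n := ⟨k + 1, by omega⟩
    contrastVec ℝ (Iio m) {m}
  | .inr (.inl k) =>
    let m : Fin n := ⟨v + 2 + k, by omega⟩
    contrastVec ℝ (Ioo v m) {m}
  | .inr (.inr s) =>
    ![fun _ => 1, contrastVec ℝ (Iio v) (Ioi v), contrastVec ℝ (univ.erase v) {v}] s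

variable (v) in
def thetaEigenvalue : Fin (v - 1) ⊕ Fin (n - v - 2) ⊕ Fin 3 → ℝ
  | .inl _ => v + 1
  | .inr (.inl _) => n - v
  | .inr (.inr s) => ![0, 1, (n : ℝ)] s

theorem lapMatrix_mulVec_thetaEigenvector (i : Fin (v - 1) ⊕ Fin (n - v - 2) ⊕ Fin 3) :
    (thetaGraph n v).lapMatrix ℝ *ᵥ thetaEigenvector v i =
      thetaEigenvalue v i • thetaEigenvector v i := by
  rcases i with k | k | s
  · refine SimpleGraph.lapMatrix_mulVec_eq_smul_of_isClique _ thetaGraph_isClique_Iio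
      thetaGraph_adj_of_notMem_Iio
      (fun i hi => thetaGraph_degree_of_lt (mem_Iio.1 hi)) (fun u hu => ?_) (sum_contrastVec _ _)
    simp only [mem_Iio, not_lt] at hu
    exact contrastVec_apply_of_notMem (by simp [Fin.lt_def]; omega) (by simp [Fin.ext_iff]; omega)
  · have hμ : thetaEigenvalue v (.inr (.inl k)) = ((n - v - 1 : ℕ) : ℝ) + 1 := by
      simp only [thetaEigenvalue]
      rw [Nat.cast_sub (by omega), Nat.cast_sub (by omega)]
      ring
    rw [hμ]
    refine SimpleGraph.lapMatrix_mulVec_eq_smul_of_isClique _ thetaGraph_isClique_Ioi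
      thetaGraph_adj_of_notMem_Ioi
      (fun i hi => thetaGraph_degree_of_gt (mem_Ioi.1 hi)) (fun u hu => ?_) (sum_contrastVec _ _)
    simp only [mem_Ioi, not_lt] at hu
    exact contrastVec_apply_of_notMem (by simp only [mem_Ioo, Fin.lt_def]; omega)
      (by simp [Fin.ext_iff]; omega)
  · fin_cases s <;>
      simp only [thetaEigenvector, thetaEigenvalue, Fin.reduceFinMk, Matrix.cons_val]
    · rw [SimpleGraph.lapMatrix_mulVec_const_eq_zero, zero_smul]
    · rw [lapMatrix_mulVec_thetaGraph_contrastVec_Iio_Ioi, one_smul]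
    · rw [SimpleGraph.lapMatrix_mulVec_contrastVec_erase_of_forall_adj
        (fun _ => thetaGraph_adj_cut), Fintype.card_fin]

theorem thetaEigenvector_inl_dotProduct_eq_zero (k : Fin (v - 1)) {y : Fin n → ℝ} {c : ℝ}
    (hy : ∀ i : Fin n, (i : ℕ) ≤ k + 1 → y i = c) : thetaEigenvector v (.inl k) ⬝ᵥ y = 0 :=
  contrastVec_dotProduct_eq_zero fun i hi => hy i <| by
    simp only [mem_union, mem_Iio, mem_singleton, Fin.lt_def, Fin.ext_iff] at hi
    omega

theorem thetaEigenvector_inr_inl_dotProduct_eq_zero (k : Fin (n - v - 2)) {y : Fin n → ℝ} {c : ℝ}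
    (hy : ∀ i : Fin n, v < i → (i : ℕ) ≤ v + 2 + k → y i = c) :
    thetaEigenvector v (.inr (.inl k)) ⬝ᵥ y = 0 :=
  contrastVec_dotProduct_eq_zero fun i hi => hy i (by
    simp only [mem_union, mem_Ioo, mem_singleton, Fin.lt_def, Fin.ext_iff] at hi ⊢
    omega) (by
    simp only [mem_union, mem_Ioo, mem_singleton, Fin.lt_def, Fin.ext_iff] at hi
    omega)

theorem thetaEigenvector_inr_inr_eq_of_lt (s : Fin 3) {i j : Fin n} (hi : i < v) (hj : j < v) :
    thetaEigenvector v (.inr (.inr s)) i = thetaEigenvector v (.inr (.inr s)) j := by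
  fin_cases s <;> simp [thetaEigenvector, contrastVec, hi, hj, hi.ne, hj.ne, hi.not_gt, hj.not_gt]

theorem thetaEigenvector_inr_inr_eq_of_gt (s : Fin 3) {i j : Fin n} (hi : v < i) (hj : v < j) :
    thetaEigenvector v (.inr (.inr s)) i = thetaEigenvector v (.inr (.inr s)) j := by
  fin_cases s <;> simp [thetaEigenvector, contrastVec, hi, hj, hi.ne', hj.ne', hi.not_gt, hj.not_gt]

theorem dotProduct_thetaEigenvector_inl_inl {k l : Fin (v - 1)} (hkl : k < l) :
    thetaEigenvector v (.inl k) ⬝ᵥ thetaEigenvector v (.inl l) = 0 :=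
  thetaEigenvector_inl_dotProduct_eq_zero k (c := 1) fun i hi => by
    simp only [thetaEigenvector, contrastVec, mem_Iio, mem_singleton, Fin.lt_def, Fin.ext_iff]
    rw [if_pos (by omega), if_neg (by omega), card_singleton, Nat.cast_one, sub_zero]

theorem dotProduct_thetaEigenvector_inl_inr_inl (k : Fin (v - 1)) (l : Fin (n - v - 2)) :
    thetaEigenvector v (.inl k) ⬝ᵥ thetaEigenvector v (.inr (.inl l)) = 0 :=
  thetaEigenvector_inl_dotProduct_eq_zero k (c := 0) fun i hi => by
    simp only [thetaEigenvector, contrastVec, mem_Ioo, mem_singleton, Fin.lt_def, Fin.ext_iff]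
    rw [if_neg (by omega), if_neg (by omega), sub_zero]

theorem dotProduct_thetaEigenvector_inl_inr_inr (k : Fin (v - 1)) (s : Fin 3) :
    thetaEigenvector v (.inl k) ⬝ᵥ thetaEigenvector v (.inr (.inr s)) = 0 :=
  thetaEigenvector_inl_dotProduct_eq_zero k
    (c := thetaEigenvector v (.inr (.inr s)) ⟨0, v.pos⟩) fun i hi =>
      thetaEigenvector_inr_inr_eq_of_lt s (by rw [Fin.lt_def]; omega)
        (by simp only [Fin.lt_def]; omega)

theorem dotProduct_thetaEigenvector_inr_inl_inr_inl {k l : Fin (n - v - 2)} (hkl : k < l) :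
    thetaEigenvector v (.inr (.inl k)) ⬝ᵥ thetaEigenvector v (.inr (.inl l)) = 0 :=
  thetaEigenvector_inr_inl_dotProduct_eq_zero k (c := 1) fun i hvi hi => by
    simp only [thetaEigenvector, contrastVec, mem_Ioo, mem_singleton, Fin.lt_def,
      Fin.ext_iff] at hvi hkl ⊢
    rw [if_pos (by omega), if_neg (by omega), card_singleton, Nat.cast_one, sub_zero]

theorem dotProduct_thetaEigenvector_inr_inl_inr_inr (k : Fin (n - v - 2)) (s : Fin 3) :
    thetaEigenvector v (.inr (.inl k)) ⬝ᵥ thetaEigenvector v (.inr (.inr s)) = 0 :=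
  thetaEigenvector_inr_inl_dotProduct_eq_zero k
    (c := thetaEigenvector v (.inr (.inr s)) ⟨n - 1, by have := v.isLt; omega⟩) fun _ hvi _ =>
      thetaEigenvector_inr_inr_eq_of_gt s hvi (by simp only [Fin.lt_def]; omega)

theorem dotProduct_thetaEigenvector_inr_inr_inr_inr {s t : Fin 3} (hst : s < t) :
    thetaEigenvector v (.inr (.inr s)) ⬝ᵥ thetaEigenvector v (.inr (.inr t)) = 0 := by
  fin_cases s <;> fin_cases t <;> first
    | exact absurd hst (by decide)
    | simp only [thetaEigenvector, Fin.reduceFinMk, Matrix.cons_val]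
  · rw [dotProduct_comm]
    exact contrastVec_dotProduct_eq_zero fun _ _ => rfl
  · rw [dotProduct_comm]
    exact contrastVec_dotProduct_eq_zero fun _ _ => rfl
  · refine contrastVec_dotProduct_eq_zero (c := 1) fun i hi => ?_
    have hiv : i ≠ v := by simp only [mem_union, mem_Iio, mem_Ioi] at hi; omega
    simp [contrastVec, hiv]

theorem thetaEigenvector_pairwise_dotProduct_eq_zero :
    Pairwise fun i j => thetaEigenvector v i ⬝ᵥ thetaEigenvector v j = 0 := by
  rintro (k | k | s) (l | l | t) hne
  · rcases lt_or_gt_of_ne (show k ≠ l by rintro rfl; exact hne rfl) with h | h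
    · exact dotProduct_thetaEigenvector_inl_inl h
    · rw [dotProduct_comm]; exact dotProduct_thetaEigenvector_inl_inl h
  · exact dotProduct_thetaEigenvector_inl_inr_inl k l
  · exact dotProduct_thetaEigenvector_inl_inr_inr k t
  · rw [dotProduct_comm]; exact dotProduct_thetaEigenvector_inl_inr_inl l k
  · rcases lt_or_gt_of_ne (show k ≠ l by rintro rfl; exact hne rfl) with h | h
    · exact dotProduct_thetaEigenvector_inr_inl_inr_inl h
    · rw [dotProduct_comm]; exact dotProduct_thetaEigenvector_inr_inl_inr_inl h
  · exact dotProduct_thetaEigenvector_inr_inl_inr_inr k t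
  · rw [dotProduct_comm]; exact dotProduct_thetaEigenvector_inl_inr_inr l s
  · rw [dotProduct_comm]; exact dotProduct_thetaEigenvector_inr_inl_inr_inr l s
  · rcases lt_or_gt_of_ne (show s ≠ t by rintro rfl; exact hne rfl) with h | h
    · exact dotProduct_thetaEigenvector_inr_inr_inr_inr h
    · rw [dotProduct_comm]; exact dotProduct_thetaEigenvector_inr_inr_inr_inr h

theorem thetaEigenvector_ne_zero (hv₀ : 0 < (v : ℕ)) (hv : (v : ℕ) + 2 ≤ n)
    (i : Fin (v - 1) ⊕ Fin (n - v - 2) ⊕ Fin 3) : thetaEigenvector v i ≠ 0 := by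
  have hfirst : (⟨0, v.pos⟩ : Fin n) < v := Fin.lt_def.2 hv₀
  have hlast : v < (⟨n - 1, by omega⟩ : Fin n) := Fin.lt_def.2 (by simp only; omega)
  rcases i with k | k | s
  · exact contrastVec_ne_zero (disjoint_singleton_right.2 (by simp))
      ⟨⟨0, v.pos⟩, by simp [Fin.lt_def]⟩ (singleton_nonempty _)
  · exact contrastVec_ne_zero (disjoint_singleton_right.2 (by simp))
      ⟨⟨v + 1, by omega⟩, by simp only [mem_Ioo, Fin.lt_def]; omega⟩ (singleton_nonempty _)
  · fin_cases s <;> simp only [thetaEigenvector, Fin.reduceFinMk, Matrix.cons_val]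
    · exact fun h => one_ne_zero (congrFun h v)
    · exact contrastVec_ne_zero (disjoint_left.2 fun i hi hi' => (mem_Iio.1 hi).not_gt
        (mem_Ioi.1 hi')) ⟨_, mem_Iio.2 hfirst⟩ ⟨_, mem_Ioi.2 hlast⟩
    · exact contrastVec_ne_zero (disjoint_singleton_right.2 (notMem_erase v univ))
        ⟨_, mem_erase.2 ⟨hfirst.ne, mem_univ _⟩⟩ (singleton_nonempty _)

end Theta

open Polynomial in
theorem charpoly_lapMatrix_thetaGraph_general (n n₁ : ℕ)
    (h1 : 1 ≤ n₁) (h2 : n₁ ≤ n - (n₁ + 1)) :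
    (SimpleGraph.lapMatrix ℝ (thetaGraph n n₁)).charpoly =
      X * (X - C (1 : ℝ)) * (X - C (n : ℝ)) * (X - C ((n₁ : ℝ) + 1)) ^ (n₁ - 1) *
        (X - C ((n : ℝ) - (n₁ : ℝ))) ^ (n - (n₁ + 2)) := by
  obtain ⟨v, rfl⟩ : ∃ v : Fin n, (v : ℕ) = n₁ := ⟨⟨n₁, by omega⟩, rfl⟩
  have hv : (v : ℕ) + 2 ≤ n := by omega
  rw [Matrix.charpoly_eq_prod_of_linearIndependent _
    (linearIndependent_of_pairwise_dotProduct_eq_zero (thetaEigenvector_ne_zero h1 hv)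
      thetaEigenvector_pairwise_dotProduct_eq_zero)
    (by simp only [Fintype.card_sum, Fintype.card_fin]; omega) lapMatrix_mulVec_thetaEigenvector]
  simp only [Fintype.prod_sum_type, thetaEigenvalue, prod_const, card_univ, Fintype.card_fin,
    Fin.prod_univ_three, Matrix.cons_val]
  rw [Nat.sub_sub, map_zero, sub_zero]
  ring

open Polynomial in
/-- The characteristic polynomial of the Laplacian matrix of `Θ_{n,n₁}` (a clique on
`n₁ + 1` vertices and a clique on `n - n₁` vertices sharing exactly one cut vertex) is
`x (x - 1) (x - n) (x - (n₁+1))^{n₁ - 1} (x - (n - n₁))^{n - (n₁+2)}`. -/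
theorem charpoly_lapMatrix_thetaGraph (n n₁ : ℕ) (hn : 3 ≤ n)
    (h1 : 1 ≤ n₁) (h2 : n₁ ≤ n - (n₁ + 1)) :
    (SimpleGraph.lapMatrix ℝ (thetaGraph n n₁)).charpoly =
      X * (X - C (1 : ℝ)) * (X - C (n : ℝ)) * (X - C ((n₁ : ℝ) + 1)) ^ (n₁ - 1) *
        (X - C ((n : ℝ) - (n₁ : ℝ))) ^ (n - (n₁ + 2)) :=
  charpoly_lapMatrix_thetaGraph_general n n₁ h1 h2
end

section
/- Let n ≥ 3 and n₁ be integers with 1 ≤ n₁ ≤ n − (n₁ + 1). The multiset of eigenvalues (roots of the characteristic polynomial, with multiplicity) of the Laplacian matrix L(Θ_{n,n₁}) is: 0 with multiplicity 1, 1 with multiplicity 1, n with multiplicity 1, n₁ + 1 with multiplicity n₁ − 1, and n − n₁ with multiplicity n − (n₁ + 2). -/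
open Finset Matrix Polynomial

namespace Matrix

theorem dotProduct_eq_zero_of_sum_eq_zero_of_const_on_support {n R : Type*} [Fintype n]
    [NonUnitalNonAssocSemiring R]
    {x y : n → R} {a : R} (hx : ∑ i, x i = 0) (hy : ∀ i, x i ≠ 0 → y i = a) : x ⬝ᵥ y = 0 := by
  have h : ∀ i, x i * y i = x i * a := fun i => by
    by_cases hxi : x i = 0
    · simp [hxi]
    · rw [hy i hxi]
  rw [dotProduct, sum_congr rfl fun i _ => h i, ← sum_mul, hx, zero_mul]

theorem IsSymm.dotProduct_eq_zero_of_mulVec_eq_smul {n K : Type*} [Fintype n] [Field K]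
    {A : Matrix n n K} (hA : A.IsSymm) {x y : n → K} {μ ν : K} (hx : A *ᵥ x = μ • x)
    (hy : A *ᵥ y = ν • y) (hμν : μ ≠ ν) : x ⬝ᵥ y = 0 := by
  have h : μ * (x ⬝ᵥ y) = ν * (x ⬝ᵥ y) := by
    rw [← smul_eq_mul, ← smul_dotProduct, ← hx, ← smul_eq_mul, ← dotProduct_smul, ← hy,
      dotProduct_mulVec, ← vecMul_transpose, hA.eq]
  exact (mul_eq_mul_right_iff.1 h).resolve_left hμν

theorem linearIndependent_of_pairwise_dotProduct_eq_zero {ι n K : Type*} [Fintype n] [Field K]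
    [LinearOrder K] [IsStrictOrderedRing K] {v : ι → n → K}
    (horth : Pairwise fun i j => v i ⬝ᵥ v j = 0) (hv : ∀ i, v i ≠ 0) : LinearIndependent K v := by
  rw [linearIndependent_iff']
  intro s g hg i hi
  have hdot : (∑ j ∈ s, g j • v j) ⬝ᵥ v i = g i * (v i ⬝ᵥ v i) := by
    rw [sum_dotProduct, sum_eq_single_of_mem i hi fun j _ hji => by
      rw [smul_dotProduct, horth hji, smul_zero], smul_dotProduct, smul_eq_mul]
  rw [hg, zero_dotProduct] at hdot
  exact (mul_eq_zero.1 hdot.symm).resolve_right (dotProduct_self_eq_zero.not.2 (hv i))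

theorem roots_charpoly_eq_of_linearIndependent {ι n K : Type*} [Fintype ι] [DecidableEq ι]
    [Fintype n] [DecidableEq n] [Field K] (A : Matrix n n K) {v : ι → n → K} {d : ι → K}
    (hli : LinearIndependent K v) (hcard : Fintype.card ι = Fintype.card n)
    (hv : ∀ i, A *ᵥ v i = d i • v i) : A.charpoly.roots = univ.val.map d := by
  let b := basisOfLinearIndependentOfCardEqFinrank' v hli (by simp [hcard])
  have hdiag : LinearMap.toMatrix b b A.toLin' = diagonal d := by
    ext i j
    have hb : A *ᵥ b j = d j • b j := by simpa [b] using hv j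
    rw [LinearMap.toMatrix_apply, toLin'_apply, hb, map_smul, b.repr_self]
    by_cases hij : i = j <;> simp [hij]
  rw [← charpoly_toLin', ← LinearMap.charpoly_toMatrix A.toLin' b, hdiag, charpoly_diagonal,
    prod_eq_multiset_prod, ← roots_multiset_prod_X_sub_C (univ.val.map d), Multiset.map_map]
  rfl

end Matrix

namespace SimpleGraph

variable {V R : Type*} [Fintype V] [DecidableEq V] [NonAssocRing R] {G : SimpleGraph V}
  [DecidableRel G.Adj]

theorem lapMatrix_mulVec_apply_eq_sum (x : V → R) (i : V) :
    (G.lapMatrix R *ᵥ x) i = ∑ j, if G.Adj i j then x i - x j else 0 := by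
  rw [lapMatrix_mulVec_apply, ← card_neighborFinset_eq_degree, ← sum_filter,
    ← neighborFinset_eq_filter, sum_sub_distrib, sum_const, nsmul_eq_mul]

section TwoCliques

variable {s t : Finset V} (hadj : ∀ i j, G.Adj i j ↔ i ≠ j ∧ (i ∈ s ∧ j ∈ s ∨ i ∈ t ∧ j ∈ t))
  (hst : ((s : Set V) ∩ t).Subsingleton)
include hadj hst

theorem lapMatrix_mulVec_apply_of_adj_iff (x : V → R) (i : V) :
    (G.lapMatrix R *ᵥ x) i = (if i ∈ s then #s * x i - ∑ j ∈ s, x j else 0) +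
      (if i ∈ t then #t * x i - ∑ j ∈ t, x j else 0) := by
  have hsplit : ∀ j, (if G.Adj i j then x i - x j else 0) =
      (if i ∈ s ∧ j ∈ s then x i - x j else 0) + (if i ∈ t ∧ j ∈ t then x i - x j else 0) := by
    intro j
    by_cases hij : i = j
    · simp [hij]
    · have : ¬((i ∈ s ∧ j ∈ s) ∧ (i ∈ t ∧ j ∈ t)) := fun ⟨⟨his, hjs⟩, hit, hjt⟩ =>
        hij (hst ⟨his, hit⟩ ⟨hjs, hjt⟩)
      simp only [hadj, ne_eq, hij, not_false_eq_true, true_and]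
      split_ifs <;> simp_all
  rw [lapMatrix_mulVec_apply_eq_sum, sum_congr rfl fun j _ => hsplit j, sum_add_distrib]
  congr 1 <;> split_ifs <;> simp [*, sum_sub_distrib]

theorem lapMatrix_mulVec_eq_card_smul_of_adj_iff {x : V → R}
    (hx : ∀ i, x i ≠ 0 → i ∈ s ∧ i ∉ t) (hsum : ∑ i, x i = 0) :
    G.lapMatrix R *ᵥ x = (#s : R) • x := by
  have hs : ∑ j ∈ s, x j = 0 := by
    rw [← hsum]
    exact sum_subset (subset_univ s) fun j _ hj => not_not.1 fun h => hj (hx j h).1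
  have ht : ∑ j ∈ t, x j = 0 := sum_eq_zero fun j hj => not_not.1 fun h => (hx j h).2 hj
  ext i
  rw [lapMatrix_mulVec_apply_of_adj_iff hadj hst]
  by_cases hxi : x i = 0
  · simp [hxi, hs, ht]
  · obtain ⟨his, hit⟩ := hx i hxi
    simp [his, hit, hs]

end TwoCliques

end SimpleGraph

section Helmert

variable {V : Type*} [DecidableEq V]

def helmertVector (R : Type*) [Ring R] (s : Finset V) (k : V) : V → R :=
  fun i => if i ∈ s then 1 else if i = k then -#s else 0

variable {R : Type*} [Ring R] {s t : Finset V} {k l : V}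

theorem sum_helmertVector [Fintype V] (hk : k ∉ s) : ∑ i, helmertVector R s k i = 0 := by
  simp [helmertVector, sum_ite, hk]

theorem mem_insert_of_helmertVector_ne_zero {i : V} (h : helmertVector R s k i ≠ 0) :
    i ∈ insert k s := by
  simp only [helmertVector] at h
  split_ifs at h with his hik
  · exact mem_insert_of_mem his
  · exact hik ▸ mem_insert_self k s
  · exact absurd rfl h

theorem helmertVector_ne_zero [Nontrivial R] (hs : s.Nonempty) : helmertVector R s k ≠ 0 := by
  obtain ⟨i, hi⟩ := hs
  intro h
  simpa [helmertVector, hi] using congrFun h i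

theorem helmertVector_dotProduct_of_subset [Fintype V] (hk : k ∉ s) (h : insert k s ⊆ t) :
    helmertVector R s k ⬝ᵥ helmertVector R t l = 0 :=
  dotProduct_eq_zero_of_sum_eq_zero_of_const_on_support (sum_helmertVector hk) fun _ hi =>
    if_pos (h (mem_insert_of_helmertVector_ne_zero hi))

theorem helmertVector_dotProduct_of_disjoint [Fintype V]
    (h : Disjoint (insert k s) (insert l t)) :
    helmertVector R s k ⬝ᵥ helmertVector R t l = 0 := by
  refine sum_eq_zero fun i _ => ?_
  by_cases hi : i ∈ insert k s
  · rw [not_ne_iff.1 fun h' => disjoint_left.1 h hi (mem_insert_of_helmertVector_ne_zero h'),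
      mul_zero]
  · rw [not_ne_iff.1 fun h' => hi (mem_insert_of_helmertVector_ne_zero h'), zero_mul]

end Helmert

namespace ThetaGraph

variable {n : ℕ} (c : Fin n)

theorem adj_iff (i j : Fin n) : (thetaGraph n c).Adj i j ↔
    i ≠ j ∧ (i ∈ Iic c ∧ j ∈ Iic c ∨ i ∈ Ici c ∧ j ∈ Ici c) := by
  simp only [mem_Iic, mem_Ici, Fin.le_def]
  rfl

theorem subsingleton_Iic_inter_Ici : ((Iic c : Set (Fin n)) ∩ Ici c).Subsingleton := by
  rintro i ⟨hi1, hi2⟩ j ⟨hj1, hj2⟩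
  simp only [coe_Iic, coe_Ici, Set.mem_Iic, Set.mem_Ici] at *
  exact (le_antisymm hi1 hi2).trans (le_antisymm hj1 hj2).symm

def blockVector (a b d : ℝ) : Fin n → ℝ := fun i => if i < c then a else if i = c then b else d

section BlockVector

variable {c} {a b d : ℝ}

theorem blockVector_of_lt {i : Fin n} (h : i < c) : blockVector c a b d i = a := if_pos h

@[simp] theorem blockVector_self : blockVector c a b d c = b := by simp [blockVector]

theorem blockVector_of_gt {i : Fin n} (h : c < i) : blockVector c a b d i = d := by
  simp [blockVector, h.not_gt, h.ne']

variable (c a b d)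

theorem smul_blockVector (r : ℝ) :
    r • blockVector c a b d = blockVector c (r * a) (r * b) (r * d) := by
  ext i
  simp only [blockVector, Pi.smul_apply, smul_eq_mul]
  split_ifs <;> rfl

theorem sum_Iic_blockVector : ∑ i ∈ Iic c, blockVector c a b d i = c * a + b := by
  rw [← Iio_insert, sum_insert (by simp), add_comm,
    sum_congr rfl fun i hi => blockVector_of_lt (mem_Iio.1 hi)]
  simp

theorem sum_Ici_blockVector : ∑ i ∈ Ici c, blockVector c a b d i = b + (n - 1 - c) * d := by
  rw [← Ioi_insert, sum_insert (by simp),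
    sum_congr rfl fun i hi => blockVector_of_gt (mem_Ioi.1 hi), blockVector_self, sum_const,
    Fin.card_Ioi, nsmul_eq_mul, Nat.sub_sub,
    Nat.cast_sub (by omega : 1 + (c : ℕ) ≤ n)]
  push_cast
  ring

theorem lapMatrix_mulVec_blockVector :
    (thetaGraph n c).lapMatrix ℝ *ᵥ blockVector c a b d =
      blockVector c (a - b) (c * (b - a) + (n - 1 - c) * (b - d)) (d - b) := by
  ext i
  rw [SimpleGraph.lapMatrix_mulVec_apply_of_adj_iff (adj_iff c) (subsingleton_Iic_inter_Ici c),
    sum_Iic_blockVector, sum_Ici_blockVector, Fin.card_Iic, Nat.cast_succ, Fin.card_Ici,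
    Nat.cast_sub c.isLt.le]
  rcases lt_trichotomy i c with h | rfl | h
  · simp only [mem_Iic, mem_Ici, h.le, h.not_ge, blockVector_of_lt h, if_true, if_false]
    ring
  · simp only [mem_Iic, mem_Ici, le_refl, blockVector_self, if_true]
    ring
  · simp only [mem_Iic, mem_Ici, h.le, h.not_ge, blockVector_of_gt h, if_true, if_false]
    ring

end BlockVector

def lowVertex (j : Fin (c - 1)) : Fin n := ⟨j + 1, by omega⟩

def highVertex (j : Fin (n - (c + 2))) : Fin n := ⟨c + 2 + j, by omega⟩

def lowHelmert (j : Fin (c - 1)) : Fin n → ℝ :=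
  helmertVector ℝ (Iio (lowVertex c j)) (lowVertex c j)

def highHelmert (j : Fin (n - (c + 2))) : Fin n → ℝ :=
  helmertVector ℝ (Ioo c (highVertex c j)) (highVertex c j)

section Helmert

variable {c}

theorem lowVertex_lt (j : Fin (c - 1)) : lowVertex c j < c := by
  simp only [Fin.lt_def, lowVertex]; omega

theorem lt_highVertex (j : Fin (n - (c + 2))) : c < highVertex c j := by
  simp only [Fin.lt_def, highVertex]; omega

theorem mulVec_lowHelmert (j : Fin (c - 1)) :
    (thetaGraph n c).lapMatrix ℝ *ᵥ lowHelmert c j = ((c : ℝ) + 1) • lowHelmert c j := by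
  have hsupp : ∀ i, lowHelmert c j i ≠ 0 → i ∈ Iic c ∧ i ∉ Ici c := fun i hi => by
    have := mem_insert_of_helmertVector_ne_zero hi
    rw [Iio_insert, mem_Iic] at this
    have := this.trans_lt (lowVertex_lt j)
    simp [this.le, this]
  rw [SimpleGraph.lapMatrix_mulVec_eq_card_smul_of_adj_iff (adj_iff c)
    (subsingleton_Iic_inter_Ici c) hsupp (sum_helmertVector (by simp)), Fin.card_Iic,
    Nat.cast_succ]

theorem mulVec_highHelmert (j : Fin (n - (c + 2))) :
    (thetaGraph n c).lapMatrix ℝ *ᵥ highHelmert c j = ((n : ℝ) - c) • highHelmert c j := by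
  have hsupp : ∀ i, highHelmert c j i ≠ 0 → i ∈ Ici c ∧ i ∉ Iic c := fun i hi => by
    have := mem_insert_of_helmertVector_ne_zero hi
    rw [Ioo_insert_right (lt_highVertex j), mem_Ioc] at this
    simp [this.1.le, this.1]
  rw [SimpleGraph.lapMatrix_mulVec_eq_card_smul_of_adj_iff
    (fun i j => (adj_iff c i j).trans (by rw [or_comm]))
    (by rw [Set.inter_comm]; exact subsingleton_Iic_inter_Ici c) hsupp
    (sum_helmertVector (by simp)), Fin.card_Ici, Nat.cast_sub c.isLt.le]

theorem lowHelmert_dotProduct_lowHelmert {j j' : Fin (c - 1)} (h : j ≠ j') :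
    lowHelmert c j ⬝ᵥ lowHelmert c j' = 0 := by
  wlog hlt : j < j' generalizing j j'
  · rw [dotProduct_comm]
    exact this h.symm (lt_of_le_of_ne (not_lt.1 hlt) h.symm)
  refine helmertVector_dotProduct_of_subset (by simp) ?_
  have hk : lowVertex c j < lowVertex c j' := by
    simp only [Fin.lt_def, lowVertex] at hlt ⊢; omega
  rw [Iio_insert]
  exact fun i hi => mem_Iio.2 ((mem_Iic.1 hi).trans_lt hk)

theorem highHelmert_dotProduct_highHelmert {j j' : Fin (n - (c + 2))} (h : j ≠ j') :
    highHelmert c j ⬝ᵥ highHelmert c j' = 0 := by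
  wlog hlt : j < j' generalizing j j'
  · rw [dotProduct_comm]
    exact this h.symm (lt_of_le_of_ne (not_lt.1 hlt) h.symm)
  refine helmertVector_dotProduct_of_subset (by simp) ?_
  rw [Ioo_insert_right (lt_highVertex j)]
  exact Ioc_subset_Ioo_right (by simp only [Fin.lt_def, highVertex] at hlt ⊢; omega)

theorem lowHelmert_dotProduct_highHelmert (j : Fin (c - 1)) (j' : Fin (n - (c + 2))) :
    lowHelmert c j ⬝ᵥ highHelmert c j' = 0 := by
  refine helmertVector_dotProduct_of_disjoint ?_
  rw [Iio_insert, Ioo_insert_right (lt_highVertex j')]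
  exact disjoint_left.2 fun i hi hi' =>
    ((mem_Iic.1 hi).trans_lt (lowVertex_lt j)).not_gt (mem_Ioc.1 hi').1

theorem lowHelmert_ne_zero (j : Fin (c - 1)) : lowHelmert c j ≠ 0 :=
  helmertVector_ne_zero ⟨⟨0, by have := j.isLt; omega⟩, by simp [Fin.lt_def, lowVertex]⟩

theorem highHelmert_ne_zero (j : Fin (n - (c + 2))) : highHelmert c j ≠ 0 :=
  helmertVector_ne_zero ⟨⟨c + 1, by have := j.isLt; omega⟩,
    by simp only [mem_Ioo, Fin.lt_def, highVertex]; omega⟩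

end Helmert

abbrev EigenIndex := Fin 3 ⊕ Fin (c - 1) ⊕ Fin (n - (c + 2))

def eigenvalue : EigenIndex c → ℝ
  | .inl e => ![0, 1, (n : ℝ)] e
  | .inr (.inl _) => c + 1
  | .inr (.inr _) => n - c

/-- The first three are the eigenvectors, for `0`, `1` and `n`, of the `3 × 3` matrix by which
`L` acts on block vectors (see `lapMatrix_mulVec_blockVector`). -/
def eigenvector : EigenIndex c → Fin n → ℝ
  | .inl e =>
    ![blockVector c 1 1 1, blockVector c (n - 1 - c) 0 (-c), blockVector c 1 (1 - n) 1] e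
  | .inr (.inl j) => lowHelmert c j
  | .inr (.inr j) => highHelmert c j

theorem mulVec_eigenvector (i : EigenIndex c) :
    (thetaGraph n c).lapMatrix ℝ *ᵥ eigenvector c i = eigenvalue c i • eigenvector c i := by
  rcases i with e | j | j
  · fin_cases e <;>
      simp only [eigenvector, eigenvalue, Fin.zero_eta, Fin.mk_one, Fin.reduceFinMk,
        Matrix.cons_val, lapMatrix_mulVec_blockVector, smul_blockVector] <;>
      congr 1 <;> ring
  · exact mulVec_lowHelmert j
  · exact mulVec_highHelmert j

theorem map_eigenvalue_univ :
    univ.val.map (eigenvalue c) =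
      Multiset.replicate 1 (0 : ℝ) + Multiset.replicate 1 (1 : ℝ) +
        Multiset.replicate 1 (n : ℝ) + Multiset.replicate (c - 1) ((c : ℝ) + 1) +
        Multiset.replicate (n - (c + 2)) ((n : ℝ) - c) := by
  rw [← univ_disjSum_univ, val_disjSum, Multiset.map_disjSum, ← univ_disjSum_univ, val_disjSum,
    Multiset.map_disjSum]
  simp [eigenvalue, Fin.univ_val_map, ← Multiset.cons_coe]

variable {c} (hc : 1 ≤ (c : ℕ)) (hcn : (c : ℕ) + 2 ≤ n)
include hc hcn

theorem eigenvector_ne_zero (i : EigenIndex c) : eigenvector c i ≠ 0 := by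
  rcases i with e | j | j
  · have hn : (c : ℝ) + 2 ≤ n := by exact_mod_cast hcn
    have h0 : (⟨0, by omega⟩ : Fin n) < c := Fin.lt_def.2 (show 0 < (c : ℕ) by omega)
    fin_cases e <;> intro h
    · simpa [eigenvector] using congrFun h c
    · have : (n : ℝ) - 1 - c = 0 := by
        simpa [eigenvector, blockVector_of_lt h0] using congrFun h ⟨0, by omega⟩
      linarith
    · have : 1 - (n : ℝ) = 0 := by simpa [eigenvector] using congrFun h c
      linarith
  · exact lowHelmert_ne_zero j
  · exact highHelmert_ne_zero j

theorem eigenvalue_inl_ne {e : Fin 3} {i : EigenIndex c} (h : i ≠ .inl e) :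
    eigenvalue c (.inl e) ≠ eigenvalue c i := by
  have h1 : (1 : ℝ) ≤ c := by exact_mod_cast hc
  have h2 : (c : ℝ) + 2 ≤ n := by exact_mod_cast hcn
  rcases i with e' | j | j <;> fin_cases e <;> try fin_cases e'
  all_goals first | exact absurd rfl h | simp [eigenvalue] <;> linarith

theorem pairwise_dotProduct_eigenvector :
    Pairwise fun i j => eigenvector c i ⬝ᵥ eigenvector c j = 0 := by
  have hspecial : ∀ e i, i ≠ .inl e → eigenvector c (.inl e) ⬝ᵥ eigenvector c i = 0 :=
    fun e i h => (SimpleGraph.isSymm_lapMatrix ℝ _).dotProduct_eq_zero_of_mulVec_eq_smul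
      (mulVec_eigenvector c _) (mulVec_eigenvector c i) (eigenvalue_inl_ne hc hcn h)
  rintro (e | j | j) (e' | j' | j') h
  · exact hspecial e _ h.symm
  · exact hspecial e _ h.symm
  · exact hspecial e _ h.symm
  · rw [dotProduct_comm]; exact hspecial e' _ h
  · exact lowHelmert_dotProduct_lowHelmert fun hj => h (by rw [hj])
  · exact lowHelmert_dotProduct_highHelmert j j'
  · rw [dotProduct_comm]; exact hspecial e' _ h
  · rw [dotProduct_comm]; exact lowHelmert_dotProduct_highHelmert j' j
  · exact highHelmert_dotProduct_highHelmert fun hj => h (by rw [hj])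

theorem card_eigenIndex : Fintype.card (EigenIndex c) = Fintype.card (Fin n) := by
  simp only [Fintype.card_sum, Fintype.card_fin]
  omega

theorem roots_charpoly_lapMatrix :
    ((thetaGraph n c).lapMatrix ℝ).charpoly.roots = univ.val.map (eigenvalue c) :=
  roots_charpoly_eq_of_linearIndependent _
    (linearIndependent_of_pairwise_dotProduct_eq_zero (pairwise_dotProduct_eigenvector hc hcn)
      (eigenvector_ne_zero hc hcn))
    (card_eigenIndex hc hcn) (mulVec_eigenvector c)

end ThetaGraph

theorem roots_charpoly_lapMatrix_thetaGraph_general (n n₁ : ℕ)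
    (h1 : 1 ≤ n₁) (h2 : n₁ ≤ n - (n₁ + 1)) :
    (SimpleGraph.lapMatrix ℝ (thetaGraph n n₁)).charpoly.roots =
      Multiset.replicate 1 (0 : ℝ) + Multiset.replicate 1 (1 : ℝ) +
        Multiset.replicate 1 (n : ℝ) +
        Multiset.replicate (n₁ - 1) ((n₁ : ℝ) + 1) +
        Multiset.replicate (n - (n₁ + 2)) ((n : ℝ) - (n₁ : ℝ)) := by
  let c : Fin n := ⟨n₁, by omega⟩
  have hcn : (c : ℕ) + 2 ≤ n := show n₁ + 2 ≤ n by omega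
  exact (ThetaGraph.roots_charpoly_lapMatrix h1 hcn).trans (ThetaGraph.map_eigenvalue_univ c)

/-- The Laplacian eigenvalues of `Θ_{n,n₁}` (roots of the characteristic polynomial
with multiplicity) are `0` with multiplicity `1`, `1` with multiplicity `1`, `n` with
multiplicity `1`, `n₁ + 1` with multiplicity `n₁ - 1`, and `n - n₁` with multiplicity
`n - (n₁ + 2)`. -/
theorem roots_charpoly_lapMatrix_thetaGraph (n n₁ : ℕ) (hn : 3 ≤ n)
    (h1 : 1 ≤ n₁) (h2 : n₁ ≤ n - (n₁ + 1)) :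
    (SimpleGraph.lapMatrix ℝ (thetaGraph n n₁)).charpoly.roots =
      Multiset.replicate 1 (0 : ℝ) + Multiset.replicate 1 (1 : ℝ) +
        Multiset.replicate 1 (n : ℝ) +
        Multiset.replicate (n₁ - 1) ((n₁ : ℝ) + 1) +
        Multiset.replicate (n - (n₁ + 2)) ((n : ℝ) - (n₁ : ℝ)) :=
  roots_charpoly_lapMatrix_thetaGraph_general n n₁ h1 h2
end
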